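/- Let F_h = k[[x_1,...,x_n,h]] with ideal I = (x_1,...,x_n,h), set x̌_j := h^{-1}x_j in F_h[h^{-1}]. Then F_h^× := ⋃_{ℓ≥0} h^{-ℓ}I^ℓ consists of all series Σ_m P_m(x̌_1,...,x̌_n)·h^m where each P_m is a polynomial and m − deg(P_m) is bounded below; the h-adic completion F_h^∨ of F_h^× is isomorphic, as a topological k[[h]]-module, to k[x̌_1,...,x̌_n][[h]], i.e. formal power series in h with polynomial coefficients in the x̌_j. -/

import Mathlib

/- STATEMENT 12: Let F_h = k[[x_1,...,x_n,h]] with ideal I = (x_1,...,x_n,h),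
set x̌_j := h^{-1}x_j in F_h[h^{-1}]. Then F_h^× := ⋃_{ℓ≥0} h^{-ℓ}I^ℓ consists
of all series Σ_m P_m(x̌_1,...,x̌_n)·h^m where each P_m is a polynomial and
m − deg(P_m) is bounded below; the h-adic completion F_h^∨ of F_h^× is
isomorphic, as a k[[h]]-module, to k[x̌_1,...,x̌_n][[h]], i.e. formal power
series in h with polynomial coefficients.
The localization F_h[h^{-1}] = k[[x_1,...,x_n]]((h)) is modelled as
W := LaurentSeries (MvPowerSeries (Fin n) k), F_h as A[[h]] with
A := MvPowerSeries (Fin n) k; a Laurent series w = Σ_t w_t h^t is of the form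
Σ_m P_m(x̌)·h^m with each P_m a polynomial and m − deg P_m bounded below
precisely when every monomial x^d of every coefficient w_t satisfies
t + |d| ≥ 0 (the lower bound on m − deg P_m being automatic from the
well-ordering of Hahn-series supports). -/

open scoped TensorProduct

set_option maxHeartbeats 1000000
set_option synthInstance.maxHeartbeats 400000

noncomputable section

variable (k : Type) [Field k] (n : ℕ)

/-- `A := k[[x_1, …, x_n]]`. -/
abbrev Acoef := MvPowerSeries (Fin n) k

/-- `W := k[[x_1, …, x_n]]((h))`, the localization `F_h[h^{-1}]`. -/
abbrev Wloc := LaurentSeries (Acoef k n)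

/-- `F_h = k[[x_1, …, x_n, h]] = A[[h]]`. -/
abbrev Fh := PowerSeries (Acoef k n)

/-- The ideal `I = (x_1, …, x_n, h)` of `F_h`. -/
def Ih : Ideal (Fh k n) :=
  Ideal.span ({PowerSeries.X} ∪
    Set.range fun i : Fin n => PowerSeries.C (MvPowerSeries.X i : Acoef k n))

/-- `h^{-ℓ} I^ℓ`, inside the localization `W = k[[x]]((h))`. -/
def hInv (ℓ : ℕ) : Set (Wloc k n) :=
  (fun u => (HahnSeries.single (-(ℓ : ℤ)) (1 : Acoef k n)) *
      (HahnSeries.ofPowerSeries ℤ (Acoef k n)) u) '' (((Ih k n) ^ ℓ : Ideal (Fh k n)) : Set (Fh k n))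

/-- `F_h^× := ⋃_ℓ h^{-ℓ} I^ℓ`, as a `k[[h]]`-submodule of the localization. -/
def Ftimes : Submodule (PowerSeries k) (Wloc k n) :=
  ⨆ ℓ : ℕ, Submodule.span (PowerSeries k) (hInv k n ℓ)

/-! ### auxiliary development -/

variable {k n}

/-- total degree of a monomial exponent -/
def deg (d : Fin n →₀ ℕ) : ℕ := ∑ i, d i

lemma deg_add (d e : Fin n →₀ ℕ) : deg (d + e) = deg d + deg e := by
  simp [deg, Finsupp.add_apply, Finset.sum_add_distrib]

lemma deg_eq_zero {d : Fin n →₀ ℕ} (h : deg d = 0) : d = 0 := by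
  ext i
  have := Finset.sum_eq_zero_iff.mp h i (Finset.mem_univ i)
  simpa using this

lemma deg_single (i : Fin n) : deg (Finsupp.single i 1) = 1 := by
  simp [deg, Finsupp.single_apply, Finset.sum_ite_eq']

lemma le_deg_apply (d : Fin n →₀ ℕ) (i : Fin n) : d i ≤ deg d :=
  Finset.single_le_sum (f := fun j => d j) (fun _ _ => Nat.zero_le _) (Finset.mem_univ i)

/-- `u` has total order at least `ℓ`. -/
def ordGE (u : Fh k n) (ℓ : ℕ) : Prop :=
  ∀ (s : ℕ) (d : Fin n →₀ ℕ),
    MvPowerSeries.coeff d (PowerSeries.coeff s u) ≠ 0 → ℓ ≤ s + deg d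

lemma ordGE_zero (u : Fh k n) : ordGE u 0 := fun _ _ _ => Nat.zero_le _

lemma ordGE_add {u v : Fh k n} {ℓ : ℕ} (hu : ordGE u ℓ) (hv : ordGE v ℓ) :
    ordGE (u + v) ℓ := by
  intro s d h
  rcases eq_or_ne (MvPowerSeries.coeff d (PowerSeries.coeff s u)) 0 with h1 | h1
  · apply hv s d
    intro h2
    apply h
    simp [map_add, h1, h2]
  · exact hu s d h1

lemma ordGE_mul {u v : Fh k n} {a b : ℕ} (hu : ordGE u a) (hv : ordGE v b) :
    ordGE (u * v) (a + b) := by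
  intro s d h
  by_contra hlt
  push_neg at hlt
  apply h
  rw [PowerSeries.coeff_mul, map_sum]
  refine Finset.sum_eq_zero fun p hp => ?_
  rw [MvPowerSeries.coeff_mul]
  refine Finset.sum_eq_zero fun q hq => ?_
  rcases eq_or_ne (MvPowerSeries.coeff q.1 (PowerSeries.coeff p.1 u)) 0 with h1 | h1
  · rw [h1, zero_mul]
  rcases eq_or_ne (MvPowerSeries.coeff q.2 (PowerSeries.coeff p.2 v)) 0 with h2 | h2
  · rw [h2, mul_zero]
  exfalso
  have e1 := hu p.1 q.1 h1
  have e2 := hv p.2 q.2 h2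
  have hps : p.1 + p.2 = s := Finset.HasAntidiagonal.mem_antidiagonal.mp hp
  have hqd : q.1 + q.2 = d := Finset.HasAntidiagonal.mem_antidiagonal.mp hq
  have hdeg : deg q.1 + deg q.2 = deg d := by rw [← hqd, deg_add]
  omega

lemma mem_Ih_ordGE {u : Fh k n} (hu : u ∈ Ih k n) : ordGE u 1 := by
  have hker : Ih k n ≤ RingHom.ker
      ((MvPowerSeries.constantCoeff).comp (PowerSeries.constantCoeff)) := by
    rw [Ih, Ideal.span_le]
    rintro x (rfl | ⟨i, rfl⟩)
    · simp [RingHom.mem_ker]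
    · simp [RingHom.mem_ker]
  have h0 : MvPowerSeries.coeff 0 (PowerSeries.coeff 0 u) = 0 := by
    have := hker hu
    rw [RingHom.mem_ker] at this
    simpa [PowerSeries.coeff_zero_eq_constantCoeff,
      MvPowerSeries.coeff_zero_eq_constantCoeff] using this
  intro s d h
  by_contra hlt
  push_neg at hlt
  have hs : s = 0 := by omega
  have hd : deg d = 0 := by omega
  subst hs
  rw [deg_eq_zero hd] at h
  exact h h0

lemma pow_ordGE {ℓ : ℕ} {u : Fh k n} (hu : u ∈ (Ih k n) ^ ℓ) : ordGE u ℓ := by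
  induction ℓ generalizing u with
  | zero => exact fun _ _ _ => Nat.zero_le _
  | succ ℓ ih =>
    rw [pow_succ] at hu
    refine Submodule.mul_induction_on hu (fun p hp q hq => ?_) (fun x y hx hy => ordGE_add hx hy)
    exact ordGE_mul (ih hp) (mem_Ih_ordGE hq)

/-- order in the coefficient power series ring -/
def mOrd (g : Acoef k n) (m : ℕ) : Prop :=
  ∀ d : Fin n →₀ ℕ, MvPowerSeries.coeff d g ≠ 0 → m ≤ deg d

variable (k n) in
def mIdeal : Ideal (Acoef k n) :=
  Ideal.span (Set.range (MvPowerSeries.X : Fin n → Acoef k n))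

lemma mOrd_mem_pow {g : Acoef k n} {m : ℕ} (h : mOrd g m) : g ∈ (mIdeal k n) ^ m := by
  induction m generalizing g with
  | zero => rw [pow_zero, Ideal.one_eq_top]; exact Submodule.mem_top
  | succ m ih =>
    classical
    set gi : Fin n → Acoef k n := fun i =>
      (fun e : Fin n →₀ ℕ =>
        if (e + Finsupp.single i 1).support.min = (i : WithTop (Fin n)) then
          MvPowerSeries.coeff (e + Finsupp.single i 1) g else 0) with hgi
    have hgi_coeff : ∀ (i : Fin n) (e : Fin n →₀ ℕ),
        MvPowerSeries.coeff e (gi i) =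
          if (e + Finsupp.single i 1).support.min = (i : WithTop (Fin n)) then
            MvPowerSeries.coeff (e + Finsupp.single i 1) g else 0 := by
      intro i e
      rw [MvPowerSeries.coeff_apply]
    have hmord : ∀ i, mOrd (gi i) m := by
      intro i e he
      rw [hgi_coeff] at he
      by_cases hc : (e + Finsupp.single i 1).support.min = (i : WithTop (Fin n))
      · rw [if_pos hc] at he
        have := h _ he
        rw [deg_add, deg_single] at this
        omega
      · rw [if_neg hc] at he
        exact absurd rfl he
    have key : g = ∑ i : Fin n, MvPowerSeries.X i * gi i := by
      ext e
      rw [map_sum]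
      by_cases he : e = 0
      · subst he
        have h0 : MvPowerSeries.coeff (0 : Fin n →₀ ℕ) g = 0 := by
          by_contra hc
          have := h _ hc
          simp [deg] at this
        rw [h0]
        symm
        exact Finset.sum_eq_zero fun i _ => MvPowerSeries.coeff_zero_X_mul _ i
      · have hne : e.support.Nonempty := Finsupp.support_nonempty_iff.mpr he
        set j := e.support.min' hne with hj
        have hmin : e.support.min = (j : WithTop (Fin n)) := (Finset.coe_min' hne).symm
        have hje : 1 ≤ e j := by
          have := Finset.min'_mem e.support hne
          rw [Finsupp.mem_support_iff] at this
          exact Nat.one_le_iff_ne_zero.mpr this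
        rw [Finset.sum_eq_single j]
        · rw [MvPowerSeries.X_def, MvPowerSeries.coeff_monomial_mul, if_pos
            (Finsupp.single_le_iff.mpr hje), one_mul, hgi_coeff,
            tsub_add_cancel_of_le (Finsupp.single_le_iff.mpr hje), if_pos hmin]
        · intro i _ hij
          rw [MvPowerSeries.X_def, MvPowerSeries.coeff_monomial_mul]
          split_ifs with hle
          · rw [one_mul, hgi_coeff, tsub_add_cancel_of_le hle, hmin]
            rw [if_neg]
            intro hcon
            exact hij (by exact_mod_cast hcon.symm)
          · rfl
        · intro hj'
          exact absurd (Finset.mem_univ j) hj'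
    rw [key, pow_succ']
    exact Ideal.sum_mem _ fun i _ =>
      Ideal.mul_mem_mul (Ideal.subset_span ⟨i, rfl⟩) (ih (hmord i))

lemma ordGE_mem_pow {u : Fh k n} {ℓ : ℕ} (h : ordGE u ℓ) : u ∈ (Ih k n) ^ ℓ := by
  induction ℓ generalizing u with
  | zero => rw [pow_zero, Ideal.one_eq_top]; exact Submodule.mem_top
  | succ ℓ ih =>
    have hdecomp : u = PowerSeries.C (PowerSeries.coeff 0 u) +
        PowerSeries.X * PowerSeries.mk (fun s => PowerSeries.coeff (s + 1) u) := by
      ext s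
      cases s with
      | zero => simp [PowerSeries.coeff_zero_eq_constantCoeff]
      | succ s => simp [PowerSeries.coeff_C, PowerSeries.coeff_succ_X_mul]
    rw [hdecomp]
    refine Ideal.add_mem _ ?_ ?_
    · have h0 : mOrd (PowerSeries.coeff 0 u) (ℓ + 1) := by
        intro d hd
        simpa using h 0 d hd
      have hmem := mOrd_mem_pow h0
      have hC : PowerSeries.C (PowerSeries.coeff 0 u) ∈
          Ideal.map (PowerSeries.C) ((mIdeal k n) ^ (ℓ + 1)) :=
        Ideal.mem_map_of_mem _ hmem
      rw [Ideal.map_pow] at hC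
      refine Ideal.pow_right_mono ?_ (ℓ + 1) hC
      rw [mIdeal, Ideal.map_span, ← Set.range_comp, Ih]
      apply Ideal.span_mono
      refine Set.Subset.trans ?_ Set.subset_union_right
      rintro x ⟨i, rfl⟩
      exact ⟨i, rfl⟩
    · rw [pow_succ']
      refine Ideal.mul_mem_mul (Ideal.subset_span (Or.inl rfl)) (ih ?_)
      intro s d hd
      rw [PowerSeries.coeff_mk] at hd
      have := h (s + 1) d hd
      omega

/-! ### Hahn series side -/

lemma hsingle_mul_coeff (ℓ t : ℤ) (z : Wloc k n) :
    ((HahnSeries.single ℓ (1 : Acoef k n)) * z).coeff t = z.coeff (t - ℓ) := by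
  have h := HahnSeries.coeff_single_mul_add (r := (1 : Acoef k n)) (x := z) (a := t - ℓ) (b := ℓ)
  rw [sub_add_cancel] at h
  rw [h, one_mul]

lemma ofPS_coeff (u : Fh k n) (t : ℤ) :
    ((HahnSeries.ofPowerSeries ℤ (Acoef k n)) u).coeff t =
      if 0 ≤ t then PowerSeries.coeff t.toNat u else 0 := by
  split_ifs with ht
  · obtain ⟨m, rfl⟩ : ∃ m : ℕ, t = (m : ℤ) := ⟨t.toNat, by omega⟩
    rw [HahnSeries.ofPowerSeries_apply_coeff]
    simp
  · rw [HahnSeries.ofPowerSeries_apply]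
    apply HahnSeries.embDomain_notin_range
    simp only [Set.mem_range, Function.Embedding.coeFn_mk, RelEmbedding.coe_mk]
    rintro ⟨m, hm⟩
    simp only [Nat.castOrderEmbedding, OrderEmbedding.coe_ofStrictMono] at hm
    omega

/-- the element `h^{-ℓ} · u` of the Laurent series ring -/
def hrep (ℓ : ℕ) (u : Fh k n) : Wloc k n :=
  (HahnSeries.single (-(ℓ : ℤ)) (1 : Acoef k n)) * (HahnSeries.ofPowerSeries ℤ (Acoef k n)) u

lemma hrep_coeff (ℓ : ℕ) (u : Fh k n) (t : ℤ) :
    (hrep ℓ u).coeff t =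
      if 0 ≤ t + ℓ then PowerSeries.coeff (t + ℓ).toNat u else 0 := by
  rw [hrep, hsingle_mul_coeff, sub_neg_eq_add, ofPS_coeff]

lemma scond_of_rep {u : Fh k n} {j : ℕ} (h : ordGE u j) (ℓ : ℕ) (t : ℤ) (d : Fin n →₀ ℕ)
    (hc : MvPowerSeries.coeff d ((hrep ℓ u).coeff t) ≠ 0) :
    (j : ℤ) - ℓ ≤ t + deg d := by
  rw [hrep_coeff] at hc
  split_ifs at hc with ht
  · have := h (t + ℓ).toNat d hc
    omega
  · simp at hc

lemma rep_exists {w : Wloc k n}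
    (hw : ∀ (t : ℤ) (d : Fin n →₀ ℕ),
      MvPowerSeries.coeff d (w.coeff t) ≠ 0 → 0 ≤ t + (deg d : ℤ)) :
    ∃ (ℓ : ℕ) (u : Fh k n), ordGE u ℓ ∧ w = hrep ℓ u := by
  by_cases h0 : w = 0
  · refine ⟨0, 0, fun s d h => by simp at h, ?_⟩
    rw [h0, hrep, map_zero, mul_zero]
  have hsupp : w.support.Nonempty := HahnSeries.support_nonempty_iff.mpr h0
  set N := w.isWF_support.min hsupp with hN
  obtain ⟨ℓ, hℓ⟩ : ∃ ℓ : ℕ, -(ℓ : ℤ) ≤ N := ⟨N.natAbs, by omega⟩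
  have hlow : ∀ t : ℤ, t < -(ℓ : ℤ) → w.coeff t = 0 := by
    intro t ht
    by_contra hc
    have : N ≤ t := Set.IsWF.min_le _ _ ((HahnSeries.mem_support w t).mpr hc)
    omega
  refine ⟨ℓ, PowerSeries.mk (fun s => w.coeff ((s : ℤ) - ℓ)), ?_, ?_⟩
  · intro s d hd
    rw [PowerSeries.coeff_mk] at hd
    have := hw _ _ hd
    omega
  · apply HahnSeries.ext
    funext t
    rw [hrep_coeff]
    split_ifs with ht
    · rw [PowerSeries.coeff_mk]
      have harg : ((t + ℓ).toNat : ℤ) - ℓ = t := by omega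
      rw [harg]
    · exact hlow t (by omega)

lemma smul_hrep (a : PowerSeries k) (ℓ : ℕ) (u : Fh k n) :
    a • hrep ℓ u = hrep ℓ (PowerSeries.map (algebraMap k (Acoef k n)) a * u) := by
  rw [hrep, hrep, Algebra.smul_def]
  have h : algebraMap (PowerSeries k) (Wloc k n) a
      = (HahnSeries.ofPowerSeries ℤ (Acoef k n)) (PowerSeries.map (algebraMap k (Acoef k n)) a) :=
    rfl
  rw [h, map_mul]
  ring

variable (k n) in
/-- The submodule described by the coefficient condition. -/
def Ssub : Submodule (PowerSeries k) (Wloc k n) where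
  carrier := {w | ∀ (t : ℤ) (d : Fin n →₀ ℕ),
    MvPowerSeries.coeff d (w.coeff t) ≠ 0 → 0 ≤ t + (deg d : ℤ)}
  add_mem' := by
    intro u v hu hv t d h
    rcases eq_or_ne (MvPowerSeries.coeff d (u.coeff t)) 0 with h1 | h1
    · apply hv t d
      intro h2
      apply h
      simp [HahnSeries.coeff_add, map_add, h1, h2]
    · exact hu t d h1
  zero_mem' := by
    intro t d h
    simp [HahnSeries.coeff_zero] at h
  smul_mem' := by
    intro a w hw
    obtain ⟨ℓ, u, hu, rfl⟩ := rep_exists hw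
    rw [smul_hrep]
    intro t d hc
    have hord : ordGE (PowerSeries.map (algebraMap k (Acoef k n)) a * u) ℓ := by
      have := ordGE_mul (ordGE_zero (PowerSeries.map (algebraMap k (Acoef k n)) a)) hu
      simpa using this
    have := scond_of_rep hord ℓ t d hc
    omega

lemma mem_Ssub_iff {w : Wloc k n} : w ∈ Ssub k n ↔
    ∀ (t : ℤ) (d : Fin n →₀ ℕ),
      MvPowerSeries.coeff d (w.coeff t) ≠ 0 → 0 ≤ t + (deg d : ℤ) := Iff.rfl

variable (k n) in
lemma ftimes_eq : Ftimes k n = Ssub k n := by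
  apply le_antisymm
  · rw [Ftimes]
    refine iSup_le fun ℓ => Submodule.span_le.mpr ?_
    rintro w ⟨u, hu, rfl⟩
    intro t d hc
    have h1 : ordGE u ℓ := pow_ordGE hu
    have := scond_of_rep h1 ℓ t d hc
    omega
  · intro w hw
    obtain ⟨ℓ, u, hu, rfl⟩ := rep_exists hw
    refine le_iSup (fun ℓ => Submodule.span (PowerSeries k) (hInv k n ℓ)) ℓ ?_
    exact Submodule.subset_span ⟨u, ordGE_mem_pow hu, rfl⟩


/-! ### the map `Ψ` to `k[x][[h]]` -/

lemma finite_coeffFun (w : Wloc k n) (m : ℕ) :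
    (Function.support fun d : Fin n →₀ ℕ =>
      MvPowerSeries.coeff d (w.coeff ((m : ℤ) - deg d))).Finite := by
  by_cases h0 : w = 0
  · convert Set.finite_empty
    ext d
    simp [h0, Function.mem_support, HahnSeries.coeff_zero]
  · have hsupp : w.support.Nonempty := HahnSeries.support_nonempty_iff.mpr h0
    set N := w.isWF_support.min hsupp with hN
    set B : ℕ := ((m : ℤ) - N).toNat with hB
    apply Set.Finite.subset (Set.finite_Iic (Finsupp.equivFunOnFinite.symm (fun _ : Fin n => B)))
    intro d hd
    rw [Function.mem_support] at hd
    have h1 : (m : ℤ) - deg d ∈ w.support := by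
      rw [HahnSeries.mem_support]
      intro hz
      rw [hz] at hd
      simp at hd
    have h2 : N ≤ (m : ℤ) - deg d := Set.IsWF.min_le _ _ h1
    have h3 : deg d ≤ B := by omega
    rw [Set.mem_Iic]
    rw [Finsupp.le_def]
    intro i
    have h4 : d i ≤ deg d := le_deg_apply d i
    simpa using le_trans h4 h3

/-- the `m`-th polynomial coefficient of a Laurent series, in rescaled variables -/
def coeffP (w : Wloc k n) (m : ℕ) : MvPolynomial (Fin n) k :=
  ∑ d ∈ (finite_coeffFun w m).toFinset,
    MvPolynomial.monomial d (MvPowerSeries.coeff d (w.coeff ((m : ℤ) - deg d)))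

lemma coeffP_coeff (w : Wloc k n) (m : ℕ) (d : Fin n →₀ ℕ) :
    MvPolynomial.coeff d (coeffP w m) = MvPowerSeries.coeff d (w.coeff ((m : ℤ) - deg d)) := by
  rw [coeffP, MvPolynomial.coeff_sum]
  rw [Finset.sum_eq_single d]
  · rw [MvPolynomial.coeff_monomial, if_pos rfl]
  · intro b _ hbd
    rw [MvPolynomial.coeff_monomial, if_neg hbd]
  · intro hd
    rw [MvPolynomial.coeff_monomial, if_pos rfl]
    rw [Set.Finite.mem_toFinset, Function.mem_support, not_not] at hd
    exact hd

/-- the map `Ψ` -/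
def Psi (w : Wloc k n) : PowerSeries (MvPolynomial (Fin n) k) :=
  PowerSeries.mk fun m => coeffP w m

lemma Psi_coeff (w : Wloc k n) (m : ℕ) (d : Fin n →₀ ℕ) :
    MvPolynomial.coeff d (PowerSeries.coeff m (Psi w)) =
      MvPowerSeries.coeff d (w.coeff ((m : ℤ) - deg d)) := by
  rw [Psi, PowerSeries.coeff_mk, coeffP_coeff]

variable (k n) in
/-- `Ψ` as an additive homomorphism. -/
def PsiHom : Wloc k n →+ PowerSeries (MvPolynomial (Fin n) k) where
  toFun := Psi
  map_zero' := by
    apply PowerSeries.ext; intro m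
    apply MvPolynomial.ext; intro d
    simp [Psi_coeff, HahnSeries.coeff_zero]
  map_add' := by
    intro u v
    apply PowerSeries.ext; intro m
    apply MvPolynomial.ext; intro d
    simp [Psi_coeff, HahnSeries.coeff_add, map_add]

lemma Psi_hrep_coeff (ℓ : ℕ) (u : Fh k n) (m : ℕ) (d : Fin n →₀ ℕ) :
    MvPolynomial.coeff d (PowerSeries.coeff m (Psi (hrep ℓ u))) =
      if deg d ≤ m + ℓ then
        MvPowerSeries.coeff d (PowerSeries.coeff (m + ℓ - deg d) u) else 0 := by
  rw [Psi_coeff, hrep_coeff]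
  by_cases h : deg d ≤ m + ℓ
  · rw [if_pos (by omega : (0:ℤ) ≤ (m : ℤ) - deg d + ℓ), if_pos h]
    have harg : ((m : ℤ) - deg d + ℓ).toNat = m + ℓ - deg d := by omega
    rw [harg]
  · rw [if_neg (by omega : ¬ (0:ℤ) ≤ (m : ℤ) - deg d + ℓ), if_neg h, map_zero]

lemma Psi_smul_hrep (a : PowerSeries k) (ℓ : ℕ) (u : Fh k n) (hu : ordGE u ℓ) :
    Psi (hrep ℓ (PowerSeries.map (algebraMap k (Acoef k n)) a * u)) =
      PowerSeries.map (algebraMap k (MvPolynomial (Fin n) k)) a * Psi (hrep ℓ u) := by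
  classical
  apply PowerSeries.ext; intro m
  apply MvPolynomial.ext; intro d
  set D := deg d with hD
  set c : ℕ → k := fun s => MvPowerSeries.coeff d (PowerSeries.coeff s u) with hc
  have hcz : ∀ s, s + D < ℓ → c s = 0 := by
    intro s hs
    by_contra hne
    have := hu s d hne
    omega
  have hLHS : MvPolynomial.coeff d (PowerSeries.coeff m
      (Psi (hrep ℓ (PowerSeries.map (algebraMap k (Acoef k n)) a * u)))) =
      if D ≤ m + ℓ then ∑ j ∈ Finset.range (m + ℓ - D + 1),
        PowerSeries.coeff j a * c (m + ℓ - D - j) else 0 := by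
    rw [Psi_hrep_coeff]
    by_cases h : D ≤ m + ℓ
    · rw [if_pos h, if_pos h, PowerSeries.coeff_mul, map_sum,
        Finset.Nat.sum_antidiagonal_eq_sum_range_succ_mk]
      refine Finset.sum_congr rfl fun j _ => ?_
      rw [PowerSeries.coeff_map]
      rw [MvPowerSeries.algebraMap_apply]
      simp only [Algebra.algebraMap_self, RingHom.id_apply]
      rw [MvPowerSeries.coeff_C_mul]
    · rw [if_neg h, if_neg h]
  have hRHS : MvPolynomial.coeff d (PowerSeries.coeff m
      (PowerSeries.map (algebraMap k (MvPolynomial (Fin n) k)) a * Psi (hrep ℓ u))) =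
      ∑ j ∈ Finset.range (m + 1),
        PowerSeries.coeff j a *
          (if D ≤ (m - j) + ℓ then c (m - j + ℓ - D) else 0) := by
    rw [PowerSeries.coeff_mul, MvPolynomial.coeff_sum,
      Finset.Nat.sum_antidiagonal_eq_sum_range_succ_mk]
    refine Finset.sum_congr rfl fun j _ => ?_
    rw [PowerSeries.coeff_map, MvPolynomial.algebraMap_eq, MvPolynomial.coeff_C_mul,
      Psi_hrep_coeff]
  rw [hLHS, hRHS]
  by_cases h : D ≤ m + ℓ
  · rw [if_pos h]
    set N := m + ℓ - D with hN
    set f : ℕ → k := fun j => PowerSeries.coeff j a * (if j ≤ N then c (N - j) else 0)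
      with hf
    have hL : ∑ j ∈ Finset.range (N + 1), PowerSeries.coeff j a * c (N - j) =
        ∑ j ∈ Finset.range (m + ℓ + 1), f j := by
      rw [show ∑ j ∈ Finset.range (N + 1), PowerSeries.coeff j a * c (N - j) =
          ∑ j ∈ Finset.range (N + 1), f j from Finset.sum_congr rfl fun j hj => by
        simp only [hf]
        rw [if_pos (by rw [Finset.mem_range] at hj; omega)]]
      apply Finset.sum_subset (Finset.range_subset_range.mpr (by omega))
      intro j _ hj
      rw [Finset.mem_range] at hj
      simp only [hf]
      rw [if_neg (by omega), mul_zero]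
    have hR : ∑ j ∈ Finset.range (m + 1), PowerSeries.coeff j a *
          (if D ≤ (m - j) + ℓ then c (m - j + ℓ - D) else 0) =
        ∑ j ∈ Finset.range (m + ℓ + 1), f j := by
      rw [show ∑ j ∈ Finset.range (m + 1), PowerSeries.coeff j a *
          (if D ≤ (m - j) + ℓ then c (m - j + ℓ - D) else 0) =
          ∑ j ∈ Finset.range (m + 1), f j from Finset.sum_congr rfl fun j hj => by
        rw [Finset.mem_range] at hj
        simp only [hf]
        by_cases hjN : j ≤ N
        · rw [if_pos (by omega), if_pos hjN]
          congr 2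
          omega
        · rw [if_neg (by omega), if_neg hjN]]
      apply Finset.sum_subset (Finset.range_subset_range.mpr (by omega))
      intro j hj2 hj
      rw [Finset.mem_range] at hj hj2
      simp only [hf]
      by_cases hjN : j ≤ N
      · rw [if_pos hjN, hcz (N - j) (by omega), mul_zero]
      · rw [if_neg hjN, mul_zero]
    rw [hL, hR]
  · rw [if_neg h]
    symm
    refine Finset.sum_eq_zero fun j hj => ?_
    rw [Finset.mem_range] at hj
    rw [if_neg (by omega), mul_zero]


/-! ### `Ψ` as a linear map on `F_h^×` -/

lemma algebraMap_T_eq :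
    (algebraMap (PowerSeries k) (PowerSeries (MvPolynomial (Fin n) k))) =
      PowerSeries.map (algebraMap k (MvPolynomial (Fin n) k)) := rfl

variable (k n) in
def PsiLin : ↥(Ftimes k n) →ₗ[PowerSeries k] PowerSeries (MvPolynomial (Fin n) k) where
  toFun x := Psi (x : Wloc k n)
  map_add' x y := by
    have := (PsiHom k n).map_add (x : Wloc k n) (y : Wloc k n)
    simpa [PsiHom] using this
  map_smul' a x := by
    simp only [RingHom.id_apply]
    have hx : (x : Wloc k n) ∈ Ssub k n := by rw [← ftimes_eq]; exact x.2
    obtain ⟨ℓ, u, hu, hxrep⟩ := rep_exists hx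
    have hcoe : ((a • x : ↥(Ftimes k n)) : Wloc k n) = a • (x : Wloc k n) := rfl
    rw [hcoe, hxrep, smul_hrep, Psi_smul_hrep a ℓ u hu, Algebra.smul_def, algebraMap_T_eq]

lemma psi_low_zero {w : Wloc k n} {ℓ : ℕ}
    (h : ∀ (t : ℤ) (d : Fin n →₀ ℕ),
      MvPowerSeries.coeff d (w.coeff t) ≠ 0 → (ℓ : ℤ) ≤ t + deg d) :
    ∀ m < ℓ, PowerSeries.coeff m (Psi w) = 0 := by
  intro m hm
  apply MvPolynomial.ext; intro d
  rw [Psi_coeff, MvPolynomial.coeff_zero]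
  by_contra hc
  have := h _ _ hc
  omega

lemma scondGE_of_psi {w : Wloc k n} (hw : w ∈ Ssub k n) (ℓ : ℕ)
    (h : ∀ m < ℓ, PowerSeries.coeff m (Psi w) = 0) :
    ∀ (t : ℤ) (d : Fin n →₀ ℕ),
      MvPowerSeries.coeff d (w.coeff t) ≠ 0 → (ℓ : ℤ) ≤ t + deg d := by
  intro t d hc
  have h0 : 0 ≤ t + (deg d : ℤ) := hw t d hc
  by_contra hlt
  push_neg at hlt
  set m := (t + deg d).toNat with hm
  have hmℓ : m < ℓ := by omega
  have hne : MvPolynomial.coeff d (PowerSeries.coeff m (Psi w)) ≠ 0 := by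
    rw [Psi_coeff]
    have harg : (m : ℤ) - deg d = t := by omega
    rw [harg]
    exact hc
  rw [h m hmℓ] at hne
  simp at hne

/-! ### characterizing `I^ℓ • ⊤` on both sides -/

lemma mem_smul_top_iff_T (ℓ : ℕ) (F : PowerSeries (MvPolynomial (Fin n) k)) :
    F ∈ ((Ideal.span {(PowerSeries.X : PowerSeries k)}) ^ ℓ • ⊤ :
        Submodule (PowerSeries k) (PowerSeries (MvPolynomial (Fin n) k))) ↔
      ∀ m < ℓ, PowerSeries.coeff m F = 0 := by
  constructor
  · intro hF
    refine Submodule.smul_induction_on hF ?_ ?_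
    · intro r hr G _ m hm
      rw [Ideal.span_singleton_pow, Ideal.mem_span_singleton] at hr
      obtain ⟨c, rfl⟩ := hr
      have hkey : (PowerSeries.X ^ ℓ * c) • G = PowerSeries.X ^ ℓ * (c • G) := by
        rw [Algebra.smul_def, Algebra.smul_def, map_mul, map_pow, algebraMap_T_eq,
          PowerSeries.map_X]
        ring
      rw [hkey]
      exact PowerSeries.X_pow_dvd_iff.mp (Dvd.intro _ rfl) m hm
    · intro x y hx hy m hm
      rw [map_add, hx m hm, hy m hm, add_zero]
  · intro h
    obtain ⟨G, hG⟩ := PowerSeries.X_pow_dvd_iff.mpr h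
    rw [hG, Ideal.span_singleton_pow]
    have hkey : (PowerSeries.X : PowerSeries k) ^ ℓ • G = PowerSeries.X ^ ℓ * G := by
      rw [Algebra.smul_def, map_pow, algebraMap_T_eq, PowerSeries.map_X]
    rw [← hkey]
    exact Submodule.smul_mem_smul (Ideal.mem_span_singleton_self _) Submodule.mem_top

lemma ordGE_map_Xpow_mul (c : PowerSeries k) (ℓ : ℕ) :
    ordGE (PowerSeries.map (algebraMap k (Acoef k n)) (PowerSeries.X ^ ℓ * c)) ℓ := by
  intro s d hs
  have hne : PowerSeries.coeff s (PowerSeries.X ^ ℓ * c) ≠ 0 := by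
    intro hz
    rw [PowerSeries.coeff_map, hz, map_zero, map_zero] at hs
    exact hs rfl
  have : ¬ s < ℓ := fun hlt => hne (PowerSeries.X_pow_dvd_iff.mp (Dvd.intro _ rfl) s hlt)
  omega

lemma single_neg_mul_mem {x : Wloc k n} (hx : x ∈ Ssub k n) (ℓ : ℕ)
    (h : ∀ (t : ℤ) (d : Fin n →₀ ℕ),
      MvPowerSeries.coeff d (x.coeff t) ≠ 0 → (ℓ : ℤ) ≤ t + deg d) :
    (HahnSeries.single (-(ℓ : ℤ)) (1 : Acoef k n)) * x ∈ Ssub k n := by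
  intro t d hc
  rw [hsingle_mul_coeff, sub_neg_eq_add] at hc
  have := h _ _ hc
  omega

lemma Xpow_smul_single_neg_mul (ℓ : ℕ) (x : Wloc k n) :
    ((PowerSeries.X : PowerSeries k) ^ ℓ) •
      ((HahnSeries.single (-(ℓ : ℤ)) (1 : Acoef k n)) * x) = x := by
  have h1 : algebraMap (PowerSeries k) (Wloc k n) ((PowerSeries.X : PowerSeries k) ^ ℓ) =
      HahnSeries.single (ℓ : ℤ) (1 : Acoef k n) := by
    have : algebraMap (PowerSeries k) (Wloc k n) ((PowerSeries.X : PowerSeries k) ^ ℓ) =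
        (HahnSeries.ofPowerSeries ℤ (Acoef k n))
          (PowerSeries.map (algebraMap k (Acoef k n)) (PowerSeries.X ^ ℓ)) := rfl
    rw [this, map_pow, PowerSeries.map_X, map_pow, HahnSeries.ofPowerSeries_X,
      HahnSeries.single_pow]
    rw [one_pow, nsmul_eq_mul, mul_one]
  rw [Algebra.smul_def, h1, ← mul_assoc, HahnSeries.single_mul_single, add_neg_cancel,
    mul_one, HahnSeries.single_zero_one, one_mul]

lemma mem_smul_top_iff_M (ℓ : ℕ) (x : ↥(Ftimes k n)) :
    x ∈ ((Ideal.span {(PowerSeries.X : PowerSeries k)}) ^ ℓ • ⊤ :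
        Submodule (PowerSeries k) ↥(Ftimes k n)) ↔
      ∀ (t : ℤ) (d : Fin n →₀ ℕ),
        MvPowerSeries.coeff d ((x : Wloc k n).coeff t) ≠ 0 → (ℓ : ℤ) ≤ t + deg d := by
  constructor
  · intro hx
    refine Submodule.smul_induction_on hx ?_ ?_
    · intro r hr g _ t d hc
      rw [Ideal.span_singleton_pow, Ideal.mem_span_singleton] at hr
      obtain ⟨c, rfl⟩ := hr
      have hg : (g : Wloc k n) ∈ Ssub k n := by rw [← ftimes_eq]; exact g.2
      obtain ⟨ℓ', u, hu, hgrep⟩ := rep_exists hg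
      have hcoe : (((PowerSeries.X ^ ℓ * c) • g : ↥(Ftimes k n)) : Wloc k n) =
          (PowerSeries.X ^ ℓ * c) • (g : Wloc k n) := rfl
      rw [hcoe, hgrep, smul_hrep] at hc
      have hord : ordGE (PowerSeries.map (algebraMap k (Acoef k n)) (PowerSeries.X ^ ℓ * c) * u)
          (ℓ + ℓ') := ordGE_mul (ordGE_map_Xpow_mul c ℓ) hu
      have := scond_of_rep hord ℓ' t d hc
      omega
    · intro y z hy hz t d hc
      have hcoe : ((y + z : ↥(Ftimes k n)) : Wloc k n) = (y : Wloc k n) + (z : Wloc k n) := rfl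
      rw [hcoe, HahnSeries.coeff_add, map_add] at hc
      rcases eq_or_ne (MvPowerSeries.coeff d ((y : Wloc k n).coeff t)) 0 with h1 | h1
      · apply hz t d
        intro h2
        rw [h1, h2, add_zero] at hc
        exact hc rfl
      · exact hy t d h1
  · intro h
    have hx : (x : Wloc k n) ∈ Ssub k n := by rw [← ftimes_eq]; exact x.2
    have hgmem : (HahnSeries.single (-(ℓ : ℤ)) (1 : Acoef k n)) * (x : Wloc k n) ∈ Ftimes k n := by
      have hmem := single_neg_mul_mem hx ℓ h
      rwa [← ftimes_eq k n] at hmem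
    have hXg : ((PowerSeries.X : PowerSeries k) ^ ℓ) • (⟨_, hgmem⟩ : ↥(Ftimes k n)) = x := by
      apply Subtype.ext
      exact Xpow_smul_single_neg_mul ℓ (x : Wloc k n)
    rw [← hXg, Ideal.span_singleton_pow]
    exact Submodule.smul_mem_smul (Ideal.mem_span_singleton_self _) Submodule.mem_top


/-! ### truncation elements -/

lemma hahn_sum_coeff {α : Type} (s : Finset α) (f : α → Wloc k n) (t : ℤ) :
    (∑ i ∈ s, f i).coeff t = ∑ i ∈ s, (f i).coeff t := by
  classical
  induction s using Finset.induction with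
  | empty => simp [HahnSeries.coeff_zero]
  | insert _ _ h ih => rw [Finset.sum_insert h, Finset.sum_insert h, HahnSeries.coeff_add, ih]

/-- The element `P(x̌)·h^j` of the Laurent series ring. -/
def belem (P : MvPolynomial (Fin n) k) (j : ℕ) : Wloc k n :=
  ∑ d ∈ P.support,
    HahnSeries.single ((j : ℤ) - deg d) ((MvPowerSeries.monomial d) (MvPolynomial.coeff d P))

lemma belem_mem_Ssub (P : MvPolynomial (Fin n) k) (j : ℕ) : belem P j ∈ Ssub k n := by
  intro t d' hc
  rw [belem, hahn_sum_coeff, map_sum] at hc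
  obtain ⟨d, hd, hne⟩ := Finset.exists_ne_zero_of_sum_ne_zero hc
  rw [HahnSeries.coeff_single] at hne
  split_ifs at hne with ht
  · rw [MvPowerSeries.coeff_monomial] at hne
    split_ifs at hne with hdd
    · subst hdd
      omega
    · exact absurd rfl hne
  · simp at hne

lemma Psi_belem (P : MvPolynomial (Fin n) k) (j : ℕ) :
    Psi (belem P j) = (PowerSeries.monomial j) P := by
  classical
  apply PowerSeries.ext; intro m
  apply MvPolynomial.ext; intro d'
  rw [Psi_coeff, PowerSeries.coeff_monomial, belem, hahn_sum_coeff, map_sum]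
  rw [Finset.sum_eq_single d']
  · rw [HahnSeries.coeff_single]
    by_cases hmj : m = j
    · rw [if_pos (by omega : (m:ℤ) - deg d' = (j:ℤ) - deg d'), if_pos hmj,
        MvPowerSeries.coeff_monomial, if_pos rfl]
    · rw [if_neg (by omega : ¬ (m:ℤ) - deg d' = (j:ℤ) - deg d'), if_neg hmj,
        MvPolynomial.coeff_zero, map_zero]
  · intro d _ hdd'
    rw [HahnSeries.coeff_single]
    split_ifs with ht
    · rw [MvPowerSeries.coeff_monomial, if_neg (fun h => hdd' h.symm)]
    · rfl
  · intro hd'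
    rw [MvPolynomial.notMem_support_iff] at hd'
    rw [hd', map_zero, HahnSeries.single_eq_zero, HahnSeries.coeff_zero, map_zero]

/-- The truncation of `F` below level `ℓ`, realized inside the Laurent series ring. -/
def truncM (F : PowerSeries (MvPolynomial (Fin n) k)) (ℓ : ℕ) : Wloc k n :=
  ∑ j ∈ Finset.range ℓ, belem (PowerSeries.coeff j F) j

lemma truncM_mem (F : PowerSeries (MvPolynomial (Fin n) k)) (ℓ : ℕ) :
    truncM F ℓ ∈ Ftimes k n := by
  rw [ftimes_eq k n]
  exact Submodule.sum_mem _ fun j _ => belem_mem_Ssub _ j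

lemma Psi_truncM (F : PowerSeries (MvPolynomial (Fin n) k)) (ℓ : ℕ) :
    ∀ m < ℓ, PowerSeries.coeff m (Psi (truncM F ℓ)) =
      PowerSeries.coeff m F := by
  intro m hm
  have h1 : Psi (truncM F ℓ) = ∑ j ∈ Finset.range ℓ,
      (PowerSeries.monomial j)
        (PowerSeries.coeff j F) := by
    rw [truncM]
    rw [show (Psi : Wloc k n → PowerSeries (MvPolynomial (Fin n) k)) = ⇑(PsiHom k n) from rfl,
      map_sum]
    exact Finset.sum_congr rfl fun j _ => Psi_belem _ j
  rw [h1, map_sum]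
  rw [Finset.sum_eq_single m]
  · rw [PowerSeries.coeff_monomial_same]
  · intro j _ hjm
    rw [PowerSeries.coeff_monomial, if_neg (fun h => hjm h.symm)]
  · intro hm'
    exact absurd (Finset.mem_range.mpr hm) hm'


/-! ### the adic completion comparison -/

lemma AdicCompletion.transitionMap_mk {R M : Type*} [CommRing R] [AddCommGroup M] [Module R M]
    (I : Ideal R) {m n : ℕ} (hmn : m ≤ n) (x : M) :
    AdicCompletion.transitionMap I M hmn
      (Submodule.Quotient.mk (p := (I ^ n • ⊤ : Submodule R M)) x) =
      Submodule.Quotient.mk (p := (I ^ m • ⊤ : Submodule R M)) x := rfl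

section

abbrev ftimesACG : AddCommGroup ↥(Ftimes k n) := (Ftimes k n).addCommGroup

attribute [local instance] ftimesACG

variable (k n) in
/-- the `h`-adic ideal -/
def Isp : Ideal (PowerSeries k) := Ideal.span {(PowerSeries.X : PowerSeries k)}

lemma psiLin_maps (ℓ : ℕ) :
    (Isp k ^ ℓ • ⊤ : Submodule (PowerSeries k) ↥(Ftimes k n)) ≤
      Submodule.comap (PsiLin k n)
        (Isp k ^ ℓ • ⊤ : Submodule (PowerSeries k) (PowerSeries (MvPolynomial (Fin n) k))) := by
  intro x hx
  rw [Submodule.mem_comap]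
  rw [Isp] at hx ⊢
  rw [mem_smul_top_iff_T]
  have h := (mem_smul_top_iff_M ℓ x).mp hx
  exact psi_low_zero h

variable (k n) in
/-- the induced map on quotients -/
def PsiQ (ℓ : ℕ) :
    (↥(Ftimes k n) ⧸ (Isp k ^ ℓ • ⊤ : Submodule (PowerSeries k) ↥(Ftimes k n))) →ₗ[PowerSeries k]
    (PowerSeries (MvPolynomial (Fin n) k) ⧸
      (Isp k ^ ℓ • ⊤ : Submodule (PowerSeries k) (PowerSeries (MvPolynomial (Fin n) k)))) :=
  Submodule.mapQ _ _ (PsiLin k n) (psiLin_maps ℓ)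

lemma psiQ_mk (ℓ : ℕ) (x : ↥(Ftimes k n)) :
    PsiQ k n ℓ (Submodule.Quotient.mk x) = Submodule.Quotient.mk (PsiLin k n x) := rfl

variable (k n) in
/-- The map between adic completions induced by `Ψ`. -/
def PhiMap :
    AdicCompletion (Isp k) ↥(Ftimes k n) →ₗ[PowerSeries k]
      AdicCompletion (Isp k) (PowerSeries (MvPolynomial (Fin n) k)) :=
  AdicCompletion.lift (Isp k)
    (fun ℓ => PsiQ k n ℓ ∘ₗ AdicCompletion.eval (Isp k) ↥(Ftimes k n) ℓ)
    (by
      intro ℓ ℓ' hle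
      apply LinearMap.ext
      intro x
      obtain ⟨y, hy⟩ := Submodule.Quotient.mk_surjective _ (x.val ℓ')
      have hx : x.val ℓ = Submodule.Quotient.mk y := by
        rw [← x.property hle, ← hy, AdicCompletion.transitionMap_mk]
      simp only [LinearMap.comp_apply, AdicCompletion.eval_apply, ← hy, hx, psiQ_mk,
        AdicCompletion.transitionMap_mk])

lemma phiMap_val (ℓ : ℕ) (x : AdicCompletion (Isp k) ↥(Ftimes k n)) :
    (PhiMap k n x).val ℓ = PsiQ k n ℓ (x.val ℓ) := rfl

lemma phiMap_injective : Function.Injective (PhiMap k n) := by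
  rw [injective_iff_map_eq_zero]
  intro x hx
  ext ℓ
  obtain ⟨y, hy⟩ := Submodule.Quotient.mk_surjective _ (x.val ℓ)
  rw [AdicCompletion.val_zero_apply, ← hy, Submodule.Quotient.mk_eq_zero]
  have h1 : Submodule.Quotient.mk
      (p := (Isp k ^ ℓ • ⊤ : Submodule (PowerSeries k) (PowerSeries (MvPolynomial (Fin n) k))))
      (PsiLin k n y) = 0 := by
    have := congrArg (fun z : AdicCompletion (Isp k) (PowerSeries (MvPolynomial (Fin n) k)) =>
      z.val ℓ) hx
    simp only [AdicCompletion.val_zero_apply] at this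
    rw [← this, phiMap_val, ← hy, psiQ_mk]
  rw [Submodule.Quotient.mk_eq_zero] at h1
  rw [Isp] at h1
  have h2 := (mem_smul_top_iff_T ℓ (PsiLin k n y)).mp h1
  have hy' : (y : Wloc k n) ∈ Ssub k n := by rw [← ftimes_eq]; exact y.2
  have h3 := scondGE_of_psi hy' ℓ h2
  rw [Isp]
  exact (mem_smul_top_iff_M ℓ y).mpr h3

lemma F_coeff_eq_of_SModEq {ℓ : ℕ} {F G : PowerSeries (MvPolynomial (Fin n) k)}
    (h : F - G ∈ (Isp k ^ ℓ • ⊤ :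
      Submodule (PowerSeries k) (PowerSeries (MvPolynomial (Fin n) k)))) :
    ∀ m < ℓ, PowerSeries.coeff m F =
      PowerSeries.coeff m G := by
  intro m hm
  rw [Isp] at h
  have := (mem_smul_top_iff_T ℓ (F - G)).mp h m hm
  rw [map_sub, sub_eq_zero] at this
  exact this

lemma phiMap_surjective : Function.Surjective (PhiMap k n) := by
  intro y
  choose F hF using fun ℓ => Submodule.Quotient.mk_surjective _ (y.val ℓ)
  have hFcomp : ∀ {j ℓ : ℕ}, j ≤ ℓ → F j - F ℓ ∈ (Isp k ^ j • ⊤ :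
      Submodule (PowerSeries k) (PowerSeries (MvPolynomial (Fin n) k))) := by
    intro j ℓ hle
    rw [← Submodule.Quotient.eq]
    rw [hF j, ← y.property hle, ← hF ℓ, AdicCompletion.transitionMap_mk]
  set xm : (ℓ : ℕ) → ↥(Ftimes k n) := fun ℓ => ⟨truncM (F ℓ) ℓ, truncM_mem _ _⟩ with hxm
  have hpsixm : ∀ ℓ, PsiLin k n (xm ℓ) = Psi (truncM (F ℓ) ℓ) := fun ℓ => rfl
  have hsub : ∀ {j ℓ : ℕ}, j ≤ ℓ → xm ℓ - xm j ∈ (Isp k ^ j • ⊤ :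
      Submodule (PowerSeries k) ↥(Ftimes k n)) := by
    intro j ℓ hle
    rw [Isp]
    rw [mem_smul_top_iff_M]
    have hmem : ((xm ℓ - xm j : ↥(Ftimes k n)) : Wloc k n) ∈ Ssub k n := by
      rw [← ftimes_eq]; exact (xm ℓ - xm j).2
    apply scondGE_of_psi hmem
    intro m hm
    have hcoe : ((xm ℓ - xm j : ↥(Ftimes k n)) : Wloc k n) =
        truncM (F ℓ) ℓ - truncM (F j) j := rfl
    rw [hcoe]
    have hps : Psi (truncM (F ℓ) ℓ - truncM (F j) j) =
        Psi (truncM (F ℓ) ℓ) - Psi (truncM (F j) j) :=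
      map_sub (PsiHom k n) _ _
    rw [hps, map_sub, Psi_truncM (F ℓ) ℓ m (by omega), Psi_truncM (F j) j m (by omega)]
    have := F_coeff_eq_of_SModEq (hFcomp hle) m hm
    rw [this, sub_self]
  have hcomp : ∀ {j ℓ' : ℕ} (hle : j ≤ ℓ'),
      AdicCompletion.transitionMap (Isp k) ↥(Ftimes k n) hle
        (Submodule.Quotient.mk (xm ℓ')) = Submodule.Quotient.mk (xm j) := by
    intro j ℓ' hle
    rw [AdicCompletion.transitionMap_mk, Submodule.Quotient.eq]
    exact hsub hle
  refine ⟨⟨fun ℓ => Submodule.Quotient.mk (xm ℓ), fun {j ℓ'} hle => hcomp hle⟩, ?_⟩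
  ext ℓ
  refine (phiMap_val ℓ _).trans ?_
  have hval : ((⟨fun ℓ => Submodule.Quotient.mk (xm ℓ), fun {j ℓ'} hle => hcomp hle⟩ :
      AdicCompletion (Isp k) ↥(Ftimes k n))).val ℓ = Submodule.Quotient.mk (xm ℓ) := rfl
  rw [hval, psiQ_mk, ← hF ℓ, Submodule.Quotient.eq]
  rw [Isp, mem_smul_top_iff_T]
  intro m hm
  rw [map_sub, hpsixm, Psi_truncM (F ℓ) ℓ m hm, sub_self]

lemma of_T_bijective :
    Function.Bijective (AdicCompletion.of (Isp k) (PowerSeries (MvPolynomial (Fin n) k))) := by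
  constructor
  · rw [injective_iff_map_eq_zero]
    intro F hF
    apply PowerSeries.ext
    intro m
    have h1 : (AdicCompletion.of (Isp k) (PowerSeries (MvPolynomial (Fin n) k)) F).val (m+1)
        = 0 := by rw [hF]; rfl
    rw [AdicCompletion.of_apply, Submodule.mkQ_apply, Submodule.Quotient.mk_eq_zero] at h1
    rw [Isp] at h1
    rw [map_zero]
    exact (mem_smul_top_iff_T (m+1) F).mp h1 m (by omega)
  · intro y
    choose F hF using fun ℓ => Submodule.Quotient.mk_surjective _ (y.val ℓ)
    have hFcomp : ∀ {j ℓ : ℕ}, j ≤ ℓ → F j - F ℓ ∈ (Isp k ^ j • ⊤ :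
        Submodule (PowerSeries k) (PowerSeries (MvPolynomial (Fin n) k))) := by
      intro j ℓ hle
      rw [← Submodule.Quotient.eq]
      rw [hF j, ← y.property hle, ← hF ℓ, AdicCompletion.transitionMap_mk]
    refine ⟨PowerSeries.mk (fun m =>
      PowerSeries.coeff m (F (m+1))), ?_⟩
    ext ℓ
    rw [AdicCompletion.of_apply, Submodule.mkQ_apply, ← hF ℓ, Submodule.Quotient.eq]
    rw [Isp, mem_smul_top_iff_T]
    intro m hm
    rw [map_sub, PowerSeries.coeff_mk, sub_eq_zero]
    exact F_coeff_eq_of_SModEq (hFcomp (by omega : m + 1 ≤ ℓ)) m (by omega)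

end

/-- (a) `F_h^×` consists exactly of the Laurent series
`Σ_m P_m(x̌)·h^m` with all `P_m` polynomials and `m − deg P_m` bounded below
(equivalently: every monomial `x^d` of every `h`-coefficient `w_t` satisfies
`t + |d| ≥ 0`); (b) the `h`-adic completion `F_h^∨` of `F_h^×` is isomorphic
as a `k[[h]]`-module to `k[x̌_1, …, x̌_n][[h]]`. -/
theorem statement12 :
    ((Ftimes k n : Set (Wloc k n)) =
      {w : Wloc k n | ∀ (t : ℤ) (d : Fin n →₀ ℕ),
        MvPowerSeries.coeff d (w.coeff t) ≠ 0 → 0 ≤ t + ∑ i, (d i : ℤ)}) ∧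
    Nonempty
      ((AdicCompletion (Ideal.span {(PowerSeries.X : PowerSeries k)}) (Ftimes k n)) ≃ₗ[PowerSeries k]
        PowerSeries (MvPolynomial (Fin n) k)) := by
  constructor
  · ext w
    rw [SetLike.mem_coe, ftimes_eq k n]
    have hdeg : ∀ d : Fin n →₀ ℕ, ((deg d : ℕ) : ℤ) = ∑ i, (d i : ℤ) := by
      intro d
      rw [deg]
      push_cast
      rfl
    constructor
    · intro h t d hc
      have := h t d hc
      rw [hdeg d] at this
      exact this
    · intro h t d hc
      have := h t d hc
      rw [← hdeg d] at this
      exact this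
  · have h1 : AdicCompletion (Isp k) ↥(Ftimes k n) ≃ₗ[PowerSeries k]
        AdicCompletion (Isp k) (PowerSeries (MvPolynomial (Fin n) k)) :=
      LinearEquiv.ofBijective (PhiMap k n) ⟨phiMap_injective, phiMap_surjective⟩
    have h2 : PowerSeries (MvPolynomial (Fin n) k) ≃ₗ[PowerSeries k]
        AdicCompletion (Isp k) (PowerSeries (MvPolynomial (Fin n) k)) :=
      LinearEquiv.ofBijective (AdicCompletion.of (Isp k) (PowerSeries (MvPolynomial (Fin n) k)))
        of_T_bijective
    exact ⟨(h1.trans h2.symm :)⟩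

end
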